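/- arXiv:0908.3246 — 3 statements merged into one kernel-verified Lean document; each statement's English description precedes it below -/
import Mathlib

section
/- Let Ψ be a nonzero totally symmetric 4-index spinor over ℂ² and R a complex scalar such that 12 Ψ_{(AD}^{\;BG} Ψ_{EF)BG} = R · Ψ_{ADEF}, where indices are raised with the symplectic form ε. Then Ψ is of Petrov type N or type D, i.e., either Ψ_{ABCD} = λ · o_A o_B o_C o_D for some spinor o and scalar λ (type N), or Ψ_{ABCD} = 6μ · o_{(A} o_B ι_C ι_{D)} for linearly independent spinors o, ι and scalar μ (type D). -/
/-!
A totally symmetric `Ψ` is determined by its five components `p k` (the value at any index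
tuple containing `k` ones), i.e. by the binary quartic `∑ (4 choose k) p k x^(4-k) y^k`, whose
linear factors are the principal spinors. The symmetrized contraction `Ψ_{(AB}{}^{EF} Ψ_{CD)EF}` is,
up to a constant, the Hessian of that quartic, so the hypothesis says the Hessian is proportional
to the quartic. If `p 0 ≠ 0`, the first three equations determine `p 2, p 3, p 4` from `p 0, p 1, R`
and force the quartic to be `p 0⁻³ (p 0 x + (p 1 - s) y)² (p 0 x + (p 1 + s) y)²` with
`s² = -R p 0 / 8`: type D when `s ≠ 0`, type N when `s = 0`. If `p 0 = 0`, then `p 1 = 0` and the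
quartic is `y²` times a quadratic which the remaining equations force to be either `p 4 y²` or a
square `(2 / (3 p 2)) (3 p 2 x + p 3 y)²`.
-/

open scoped BigOperators

noncomputable section

/-- Components of a covector (one-index spinor) over spin space `S = ℂ²`. -/
abbrev Sp := Fin 2 → ℂ

/-- A 4-index spinor (all indices of the same 2-dimensional type). -/
abbrev Tensor4 := Fin 2 → Fin 2 → Fin 2 → Fin 2 → ℂ

/-- The symplectic form ε, with ε₀₁ = 1 = -ε₁₀. -/
def eps : Fin 2 → Fin 2 → ℂ := ![![0, 1], ![-1, 0]]

/-- Index raising: `(up α) A = ε^{AB} α_B`. -/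
def up (α : Sp) : Sp := fun A => ∑ B, eps A B * α B

/-- The ε-pairing `α_A β^A`. -/
def pair (α β : Sp) : ℂ := ∑ A, α A * up β A

/-- Complex conjugate spinor (components in the conjugate spin space). -/
def conjSp (α : Sp) : Sp := fun A => (starRingEnd ℂ) (α A)

/-- Total symmetrization of a 4-index spinor (with the 1/4! normalization). -/
def symz (T : Tensor4) : Tensor4 := fun A B C D =>
  (1 / 24 : ℂ) * ∑ σ : Equiv.Perm (Fin 4),
    T (![A, B, C, D] (σ 0)) (![A, B, C, D] (σ 1)) (![A, B, C, D] (σ 2)) (![A, B, C, D] (σ 3))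

/-- Symmetrized product `α_{(A} β_B γ_C δ_{D)}` of four one-index spinors. -/
def Sym4 (α β γ δ : Sp) : Tensor4 :=
  symz (fun A B C D => α A * β B * γ C * δ D)

/-- Total symmetry of a 4-index spinor. -/
def TotSym4 (Ψ : Tensor4) : Prop :=
  ∀ A B C D, Ψ A B C D = Ψ B A C D ∧ Ψ A B C D = Ψ A C B D ∧ Ψ A B C D = Ψ A B D C

/-- The contraction `Ψ_{AD}{}^{BG} Ψ_{EFBG}` (indices raised with ε). -/
def Qc (Ψ : Tensor4) : Tensor4 := fun A D E F =>
  ∑ B, ∑ G, ∑ P, ∑ Q, eps B P * eps G Q * Ψ A D P Q * Ψ E F B G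

def ofComponents (p : Fin 5 → ℂ) : Tensor4 := fun A B C D => p ⟨A + B + C + D, by omega⟩

theorem TotSym4.eq_ofComponents {Ψ : Tensor4} (h : TotSym4 Ψ) :
    Ψ = ofComponents ![Ψ 0 0 0 0, Ψ 0 0 0 1, Ψ 0 0 1 1, Ψ 0 1 1 1, Ψ 1 1 1 1] := by
  funext A B C D
  fin_cases A <;> fin_cases B <;> fin_cases C <;> fin_cases D <;>
    simp only [ofComponents, Fin.zero_eta, Fin.mk_one, Fin.isValue, Nat.reduceAdd, add_zero,
      zero_add, Fin.reduceFinMk, Matrix.cons_val_zero, Matrix.cons_val_one, Matrix.cons_val] <;>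
    grind [TotSym4]

theorem symz_apply (T : Tensor4) (A B C D : Fin 2) :
    symz T A B C D =
    (1/24 : ℂ) * (T A B C D + T A B D C + (T A C B D + T A C D B + (T A D C B + T A D B C)) +
    (T B A C D + T B A D C + (T B C A D + T B C D A + (T B D C A + T B D A C)) +
    (T C B A D + T C B D A + (T C A B D + T C A D B + (T C D A B + T C D B A)) +
    (T D B C A + T D B A C + (T D C B A + T D C A B + (T D A C B + T D A B C)))))) := by
  simp only [symz, ← Equiv.Perm.decomposeFin.symm.sum_comp, Fintype.sum_prod_type,
    Fin.sum_univ_succ, Finset.univ_unique, Finset.sum_singleton]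
  rfl

theorem totSym4_symz (T : Tensor4) : TotSym4 (symz T) := fun A B C D => by
  refine ⟨?_, ?_, ?_⟩ <;> rw [symz_apply, symz_apply] <;> ring

theorem Qc_apply (Ψ : Tensor4) (A D E F : Fin 2) :
    Qc Ψ A D E F = Ψ A D 1 1 * Ψ E F 0 0 - Ψ A D 1 0 * Ψ E F 0 1
      - Ψ A D 0 1 * Ψ E F 1 0 + Ψ A D 0 0 * Ψ E F 1 1 := by
  simp only [Qc, eps, Fin.sum_univ_two, Matrix.cons_val_zero, Matrix.cons_val_one]
  ring

/-- Up to normalisation, the Hessian covariant of the binary quartic with components `p`. -/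
def hessian (p : Fin 5 → ℂ) : Fin 5 → ℂ :=
  ![2 * (p 0 * p 2 - p 1 ^ 2), p 0 * p 3 - p 1 * p 2, (p 0 * p 4 + 2 * p 1 * p 3 - 3 * p 2 ^ 2) / 3,
    p 1 * p 4 - p 2 * p 3, 2 * (p 2 * p 4 - p 3 ^ 2)]

theorem symz_Qc_ofComponents (p : Fin 5 → ℂ) :
    symz (Qc (ofComponents p)) = ofComponents (hessian p) := by
  rw [(totSym4_symz _).eq_ofComponents]
  congr 1
  ext k
  fin_cases k <;> simp only [symz_apply, Qc_apply, ofComponents, hessian, Fin.isValue,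
    Fin.coe_ofNat_eq_mod, Nat.zero_mod, Nat.mod_succ, Nat.reduceAdd, add_zero, zero_add,
    Fin.reduceFinMk, Fin.zero_eta, Fin.mk_one, Matrix.cons_val_zero, Matrix.cons_val_one,
    Matrix.cons_val] <;> ring

def powComponents (o : Sp) : Fin 5 → ℂ := fun k => o 0 ^ (4 - k.val) * o 1 ^ k.val

def sym4Components (o ι : Sp) : Fin 5 → ℂ :=
  ![o 0 ^ 2 * ι 0 ^ 2, (o 0 * o 1 * ι 0 ^ 2 + o 0 ^ 2 * ι 0 * ι 1) / 2,
    (o 1 ^ 2 * ι 0 ^ 2 + 4 * o 0 * o 1 * ι 0 * ι 1 + o 0 ^ 2 * ι 1 ^ 2) / 6,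
    (o 1 ^ 2 * ι 0 * ι 1 + o 0 * o 1 * ι 1 ^ 2) / 2, o 1 ^ 2 * ι 1 ^ 2]

theorem ofComponents_powComponents (o : Sp) (A B C D : Fin 2) :
    ofComponents (powComponents o) A B C D = o A * o B * o C * o D := by
  fin_cases A <;> fin_cases B <;> fin_cases C <;> fin_cases D <;>
    simp only [ofComponents, powComponents, Fin.zero_eta, Fin.mk_one, Nat.reduceAdd,
      Nat.reduceSub] <;> ring

theorem ofComponents_sym4Components (o ι : Sp) :
    ofComponents (sym4Components o ι) = Sym4 o o ι ι := by
  rw [Sym4, (totSym4_symz _).eq_ofComponents]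
  congr 1
  ext k
  fin_cases k <;> simp only [symz_apply, sym4Components, Fin.isValue, Fin.zero_eta,
    Fin.mk_one, Fin.reduceFinMk, Matrix.cons_val_zero, Matrix.cons_val_one, Matrix.cons_val] <;> ring

theorem sym4Components_self (o : Sp) : sym4Components o o = powComponents o := by
  ext k
  fin_cases k <;> simp only [sym4Components, powComponents, Fin.isValue, Fin.zero_eta,
    Fin.mk_one, Fin.reduceFinMk, Matrix.cons_val_zero, Matrix.cons_val_one, Matrix.cons_val,
    Nat.reduceSub] <;> ring

theorem pair_apply (α β : Sp) : pair α β = α 0 * β 1 - α 1 * β 0 := by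
  simp only [pair, up, eps, Fin.sum_univ_two, Matrix.cons_val_zero, Matrix.cons_val_one,
    Matrix.cons_val', Matrix.cons_val_fin_one]
  ring

theorem linearIndependent_of_pair_ne_zero {o ι : Sp} (h : pair o ι ≠ 0) :
    LinearIndependent ℂ ![o, ι] := by
  refine Matrix.linearIndependent_rows_iff_isUnit (A := Matrix.of ![o, ι]) |>.mpr ?_
  rw [Matrix.isUnit_iff_isUnit_det, Matrix.det_fin_two, isUnit_iff_ne_zero]
  simpa [pair_apply] using h

def IsTypeN (Ψ : Tensor4) : Prop :=
  ∃ (o : Sp) (lam : ℂ), ∀ A B C D, Ψ A B C D = lam * (o A * o B * o C * o D)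

def IsTypeD (Ψ : Tensor4) : Prop :=
  ∃ (o ι : Sp) (μ : ℂ), LinearIndependent ℂ ![o, ι] ∧
    ∀ A B C D, Ψ A B C D = 6 * μ * Sym4 o o ι ι A B C D

theorem isTypeN_ofComponents (lam : ℂ) (o : Sp) : IsTypeN (ofComponents (lam • powComponents o)) :=
  ⟨o, lam, fun A B C D => by rw [← ofComponents_powComponents]; rfl⟩

theorem isTypeD_ofComponents (c : ℂ) {o ι : Sp} (h : pair o ι ≠ 0) :
    IsTypeD (ofComponents (c • sym4Components o ι)) :=
  ⟨o, ι, c / 6, linearIndependent_of_pair_ne_zero h, fun A B C D => by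
    rw [← ofComponents_sym4Components, mul_div_cancel₀ c (by norm_num : (6 : ℂ) ≠ 0)]; rfl⟩

section

variable {p : Fin 5 → ℂ} {R : ℂ}

theorem hessian_eigen_equations (h : ∀ k, 12 * hessian p k = R * p k) :
    p 0 * p 2 - p 1 ^ 2 = R / 24 * p 0 ∧ p 0 * p 3 - p 1 * p 2 = R / 12 * p 1 ∧
      p 0 * p 4 + 2 * p 1 * p 3 - 3 * p 2 ^ 2 = R / 4 * p 2 ∧
      p 1 * p 4 - p 2 * p 3 = R / 12 * p 3 ∧ p 2 * p 4 - p 3 ^ 2 = R / 24 * p 4 := by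
  have h0 := h 0; have h1 := h 1; have h2 := h 2; have h3 := h 3; have h4 := h 4
  simp only [hessian, Matrix.cons_val] at h0 h1 h2 h3 h4
  refine ⟨?_, ?_, ?_, ?_, ?_⟩
  · linear_combination h0 / 24
  · linear_combination h1 / 12
  · linear_combination h2 / 4
  · linear_combination h3 / 12
  · linear_combination h4 / 24

theorem eq_smul_sym4Components_of_head_ne_zero {s : ℂ} (hp0 : p 0 ≠ 0)
    (f0 : p 0 * p 2 - p 1 ^ 2 = R / 24 * p 0) (f1 : p 0 * p 3 - p 1 * p 2 = R / 12 * p 1)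
    (f2 : p 0 * p 4 + 2 * p 1 * p 3 - 3 * p 2 ^ 2 = R / 4 * p 2) (hs : s ^ 2 = -(R * p 0) / 8) :
    p = (p 0 ^ 3)⁻¹ • sym4Components ![p 0, p 1 - s] ![p 0, p 1 + s] := by
  have e2 : p 0 * p 2 = p 1 ^ 2 - s ^ 2 / 3 := by linear_combination f0 + hs / 3
  have e3 : p 0 ^ 2 * p 3 = p 1 ^ 3 - p 1 * s ^ 2 := by
    linear_combination p 0 * f1 + p 1 * f0 + p 1 * hs
  -- substitute `e2`, `e3` and `R * p 0 = -8 * s ^ 2` into `p 0 ^ 2 * f2`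
  have e4 : p 0 ^ 3 * p 4 = (p 1 ^ 2 - s ^ 2) ^ 2 := by
    linear_combination p 0 ^ 2 * f2 - 2 * p 1 * e3
      + (3 * (p 0 * p 2 + p 1 ^ 2 - s ^ 2 / 3) + R * p 0 / 4) * e2 + 2 * (p 1 ^ 2 - s ^ 2 / 3) * hs
  rw [eq_inv_smul_iff₀ (pow_ne_zero 3 hp0)]
  ext k
  fin_cases k <;> simp only [Fin.zero_eta, Fin.mk_one, Fin.reduceFinMk, Pi.smul_apply,
    smul_eq_mul, sym4Components, Matrix.cons_val_zero, Matrix.cons_val_one, Matrix.cons_val_fin_one,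
    Matrix.cons_val]
  · ring
  · ring
  · linear_combination p 0 ^ 2 * e2
  · linear_combination p 0 * e3
  · linear_combination e4

theorem isTypeN_or_isTypeD_of_head_ne_zero (hp0 : p 0 ≠ 0)
    (f0 : p 0 * p 2 - p 1 ^ 2 = R / 24 * p 0) (f1 : p 0 * p 3 - p 1 * p 2 = R / 12 * p 1)
    (f2 : p 0 * p 4 + 2 * p 1 * p 3 - 3 * p 2 ^ 2 = R / 4 * p 2) :
    IsTypeN (ofComponents p) ∨ IsTypeD (ofComponents p) := by
  obtain ⟨s, hs⟩ := IsAlgClosed.exists_pow_nat_eq (-(R * p 0) / 8) two_pos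
  rw [eq_smul_sym4Components_of_head_ne_zero hp0 f0 f1 f2 hs]
  by_cases hs0 : s = 0
  · left
    rw [hs0, sub_zero, add_zero, sym4Components_self]
    exact isTypeN_ofComponents _ _
  · right
    have hpair : pair ![p 0, p 1 - s] ![p 0, p 1 + s] = 2 * p 0 * s := by
      simp only [pair_apply, Matrix.cons_val_zero, Matrix.cons_val_one]
      ring
    exact isTypeD_ofComponents _ (by simp [hpair, hp0, hs0])

theorem isTypeN_or_isTypeD_of_head_eq_zero (hp0 : p 0 = 0)
    (f0 : p 0 * p 2 - p 1 ^ 2 = R / 24 * p 0)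
    (f2 : p 0 * p 4 + 2 * p 1 * p 3 - 3 * p 2 ^ 2 = R / 4 * p 2)
    (f3 : p 1 * p 4 - p 2 * p 3 = R / 12 * p 3) (f4 : p 2 * p 4 - p 3 ^ 2 = R / 24 * p 4) :
    IsTypeN (ofComponents p) ∨ IsTypeD (ofComponents p) := by
  have hp1 : p 1 = 0 :=
    pow_eq_zero_iff two_ne_zero |>.mp (by linear_combination -f0 + (p 2 - R / 24) * hp0)
  by_cases hp2 : p 2 = 0
  · have hp3 : p 3 = 0 := pow_eq_zero_iff three_ne_zero |>.mp <| by
      linear_combination -p 3 * f4 + p 4 / 2 * f3 + 3 / 2 * p 3 * p 4 * hp2 - p 4 ^ 2 / 2 * hp1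
    have hN : p = p 4 • powComponents ![0, 1] := by
      ext k
      fin_cases k <;> simp [powComponents, hp0, hp1, hp2, hp3]
    left
    rw [hN]
    exact isTypeN_ofComponents _ _
  · have hR : R = -12 * p 2 :=
      mul_left_cancel₀ hp2 (by linear_combination -4 * f2 + 4 * p 4 * hp0 + 8 * p 3 * hp1)
    have hp4 : 3 * p 2 * p 4 = 2 * p 3 ^ 2 := by linear_combination 2 * f4 + p 4 / 12 * hR
    have hD : p = (3 * p 2 / 2)⁻¹ • sym4Components ![0, 1] ![3 * p 2, p 3] := by
      rw [eq_inv_smul_iff₀ (by simpa using hp2)]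
      ext k
      fin_cases k <;> simp only [Fin.zero_eta, Fin.mk_one, Fin.reduceFinMk, Pi.smul_apply,
        smul_eq_mul, sym4Components, Matrix.cons_val_zero, Matrix.cons_val_one,
        Matrix.cons_val_fin_one, Matrix.cons_val]
      · linear_combination 3 * p 2 / 2 * hp0
      · linear_combination 3 * p 2 / 2 * hp1
      · ring
      · ring
      · linear_combination hp4 / 2
    right
    rw [hD]
    exact isTypeD_ofComponents _ (by simpa [pair_apply] using hp2)

theorem isTypeN_or_isTypeD_of_hessian_eq (h : ∀ k, 12 * hessian p k = R * p k) :
    IsTypeN (ofComponents p) ∨ IsTypeD (ofComponents p) := by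
  obtain ⟨f0, f1, f2, f3, f4⟩ := hessian_eigen_equations h
  by_cases hp0 : p 0 = 0
  · exact isTypeN_or_isTypeD_of_head_eq_zero hp0 f0 f2 f3 f4
  · exact isTypeN_or_isTypeD_of_head_ne_zero hp0 f0 f1 f2

end

theorem eigen_condition_implies_type_N_or_D_general (Ψ : Tensor4) (R : ℂ)
    (hsym : TotSym4 Ψ)
    (h : ∀ A D E F, 12 * symz (Qc Ψ) A D E F = R * Ψ A D E F) :
    (∃ (o : Sp) (lam : ℂ), ∀ A B C D, Ψ A B C D = lam * (o A * o B * o C * o D)) ∨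
    (∃ (o ι : Sp) (μ : ℂ), LinearIndependent ℂ ![o, ι] ∧
      ∀ A B C D, Ψ A B C D = 6 * μ * Sym4 o o ι ι A B C D) := by
  obtain ⟨p, rfl⟩ : ∃ p, Ψ = ofComponents p := ⟨_, hsym.eq_ofComponents⟩
  rw [symz_Qc_ofComponents] at h
  have hp : ∀ k, 12 * hessian p k = R * p k := by
    intro k
    fin_cases k
    exacts [h 0 0 0 0, h 0 0 0 1, h 0 0 1 1, h 0 1 1 1, h 1 1 1 1]
  exact isTypeN_or_isTypeD_of_hessian_eq hp

/-- a nonzero totally symmetric 4-index spinor satisfying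
`12 Ψ_{(AD}{}^{BG} Ψ_{EF)BG} = R Ψ_{ADEF}` is of Petrov type N or type D. -/
theorem eigen_condition_implies_type_N_or_D (Ψ : Tensor4) (R : ℂ)
    (hsym : TotSym4 Ψ) (hne : Ψ ≠ 0)
    (h : ∀ A D E F, 12 * symz (Qc Ψ) A D E F = R * Ψ A D E F) :
    (∃ (o : Sp) (lam : ℂ), ∀ A B C D, Ψ A B C D = lam * (o A * o B * o C * o D)) ∨
    (∃ (o ι : Sp) (μ : ℂ), LinearIndependent ℂ ![o, ι] ∧
      ∀ A B C D, Ψ A B C D = 6 * μ * Sym4 o o ι ι A B C D) :=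
  eigen_condition_implies_type_N_or_D_general Ψ R hsym h
end
end

section
/- Let Ψ_{ABCD} = 6μ o_{(A} o_B ι_C ι_{D)} be a nonzero type-D symmetric spinor (with o_A ι^A = 1, μ ≠ 0) and Φ_{ABA'B'} a Hermitian spinor, symmetric in AB and in A'B', satisfying Φ_{A'B'(C}^{\;\;\;G} Ψ_{DEF)G} = 0. Then Φ_{ABA'B'} = 4φ · o_{(A} ι_{B)} ō_{(A'} ῑ_{B')} for some real scalar φ. -/
/-!
Fix the primed indices and put `φ_{AB} = Φ_{ABA'B'}`. Contracting the vanishing spinor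
`φ_{(C}{}^G Ψ_{DEF)G}` with `o^C o^D o^E ι^F` gives `μ φ_{AB} o^A o^B = 0`, and, since `Ψ`
is symmetric under `o ↔ ι`, also `φ_{AB} ι^A ι^B = 0`. The dyad expansion of the symmetric
`φ` then leaves only its `o_{(A} ι_{B)}` component: `Φ_{ABA'B'} = λ_{A'B'} o_{(A} ι_{B)}`.
Hermiticity of `Φ` forces `λ_{A'B'}` to be a real multiple of `ō_{(A'} ῑ_{B')}`.
-/

open scoped BigOperators

noncomputable section

theorem symz_expand (T : Tensor4) (A B C D : Fin 2) :
    symz T A B C D = (1/24) * (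
      T A B C D + T A B D C + T A C B D + T A C D B + T A D C B + T A D B C +
      T B A C D + T B A D C + T B C A D + T B C D A + T B D C A + T B D A C +
      T C B A D + T C B D A + T C A B D + T C A D B + T C D A B + T C D B A +
      T D B C A + T D B A C + T D C B A + T D C A B + T D A C B + T D A B C) := by
  rw [symz]
  congr 1
  simp only [← Equiv.sum_comp Equiv.Perm.decomposeFin.symm, Fintype.sum_prod_type,
    Fin.sum_univ_succ, Finset.univ_unique, Finset.sum_singleton]
  -- the `decomposeFin` simp lemmas only fire on arguments of the form `Fin.succ _`
  repeat simp only [show (1 : Fin 4) = Fin.succ 0 from rfl,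
    show (2 : Fin 4) = Fin.succ 1 from rfl, show (3 : Fin 4) = Fin.succ 2 from rfl,
    show (1 : Fin 3) = Fin.succ 0 from rfl,
    show (2 : Fin 3) = Fin.succ 1 from rfl, show (1 : Fin 2) = Fin.succ 0 from rfl,
    Equiv.Perm.decomposeFin_symm_apply_zero, Equiv.Perm.decomposeFin_symm_apply_succ]
  simp [Equiv.swap_apply_def, Fin.ext_iff]
  ring

theorem Sym4_swap (α β γ δ : Sp) : Sym4 α β γ δ = Sym4 γ δ α β := by
  funext A B C D
  simp only [Sym4, symz_expand]
  ring

theorem pair_swap (α β : Sp) : pair β α = -pair α β := by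
  simp only [pair, up, eps, Fin.sum_univ_two, Matrix.cons_val_zero, Matrix.cons_val_one]
  ring

/-- `φ_{AB} x^A y^B`. -/
def contract2 (φ : Fin 2 → Fin 2 → ℂ) (x y : Sp) : ℂ :=
  ∑ A, ∑ B, φ A B * up x A * up y B

/-- `T_{ABCD} x^A y^B z^C w^D`. -/
def contract4 (T : Tensor4) (x y z w : Sp) : ℂ :=
  ∑ A, ∑ B, ∑ C, ∑ D, T A B C D * up x A * up y B * up z C * up w D

/-- `φ_C{}^G Ψ_{DEFG}`. -/
def contractLast (φ : Fin 2 → Fin 2 → ℂ) (Ψ : Tensor4) : Tensor4 :=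
  fun C D E F => ∑ G, ∑ H, eps G H * φ C H * Ψ D E F G

theorem contract4_symz (T : Tensor4) (x y : Sp) :
    contract4 (symz T) x x x y = (contract4 T y x x x + contract4 T x y x x
      + contract4 T x x y x + contract4 T x x x y) / 4 := by
  simp only [contract4, symz_expand, Fin.sum_univ_two]
  ring

theorem six_mul_Sym4_aabb (α β : Sp) (A B C D : Fin 2) :
    6 * Sym4 α α β β A B C D = α A * α B * β C * β D + α A * α C * β B * β D
      + α A * α D * β B * β C + α B * α C * β A * β D + α B * α D * β A * β C
      + α C * α D * β A * β B := by
  rw [Sym4, symz_expand]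
  ring

/-- Of the four terms given by `contract4_symz`, the one with `ι^` on `φ` vanishes since
`Ψ_{DEFG} o^D o^E o^F = 0`, and each of the other three is `-μ (o_A ι^A)³ φ_{AB} o^A o^B`. -/
theorem contract4_symz_contractLast_typeD (φ : Fin 2 → Fin 2 → ℂ) (o ι : Sp) (μ : ℂ)
    (Ψ : Tensor4) (hΨ : ∀ A B C D, Ψ A B C D = 6 * μ * Sym4 o o ι ι A B C D) :
    contract4 (symz (contractLast φ Ψ)) o o o ι =
      -(3 / 4) * μ * pair o ι ^ 3 * contract2 φ o o := by
  have hΨ₆ : ∀ A B C D, Ψ A B C D = μ * (6 * Sym4 o o ι ι A B C D) := fun A B C D => by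
    rw [hΨ]; ring
  rw [contract4_symz]
  simp only [contract4, contractLast, hΨ₆, six_mul_Sym4_aabb, contract2, pair, up, eps,
    Fin.sum_univ_two, Matrix.cons_val_zero, Matrix.cons_val_one]
  ring

theorem contract2_eq_zero_of_symz_contractLast_eq_zero (φ : Fin 2 → Fin 2 → ℂ) (o ι : Sp)
    (μ : ℂ) (Ψ : Tensor4) (hoι : pair o ι ≠ 0) (hμ : μ ≠ 0)
    (hΨ : ∀ A B C D, Ψ A B C D = 6 * μ * Sym4 o o ι ι A B C D)
    (h : symz (contractLast φ Ψ) = 0) : contract2 φ o o = 0 := by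
  have hzero : contract4 (symz (contractLast φ Ψ)) o o o ι = 0 := by
    simp [h, contract4]
  rw [contract4_symz_contractLast_typeD φ o ι μ Ψ hΨ] at hzero
  simpa [hμ, hoι] using hzero

theorem pair_sq_mul_eq_dyad_expansion (φ : Fin 2 → Fin 2 → ℂ)
    (hφ : ∀ A B, φ A B = φ B A) (o ι : Sp) (A B : Fin 2) :
    pair o ι ^ 2 * φ A B = contract2 φ ι ι * o A * o B
      - contract2 φ o ι * (o A * ι B + o B * ι A) + contract2 φ o o * ι A * ι B := by
  have h10 := hφ 1 0
  fin_cases A <;> fin_cases B <;>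
    simp only [contract2, pair, up, eps, Fin.sum_univ_two, Matrix.cons_val_zero,
      Matrix.cons_val_one, h10, Fin.zero_eta, Fin.mk_one] <;> ring

theorem exists_real_of_hermitian_of_eq_mul {κ : Type*} (M : κ → κ → ℂ) (m lam : κ → ℂ)
    (hM : ∀ i j, M i j = lam j * m i) (hherm : ∀ i j, M i j = starRingEnd ℂ (M j i)) :
    ∃ r : ℝ, ∀ i j, M i j = r * m i * starRingEnd ℂ (m j) := by
  by_cases hm : ∀ i, m i = 0
  · exact ⟨0, fun i j => by simp [hM, hm]⟩
  push Not at hm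
  obtain ⟨a, ha⟩ := hm
  have hlam : ∀ j, lam j = starRingEnd ℂ (lam a) / m a * starRingEnd ℂ (m j) := by
    intro j
    have h := hherm a j
    rw [hM, hM, map_mul] at h
    rw [div_mul_eq_mul_div, eq_div_iff ha]
    linear_combination h
  set c := starRingEnd ℂ (lam a) / m a
  have hM' : ∀ i j, M i j = c * m i * starRingEnd ℂ (m j) := by
    intro i j
    rw [hM, hlam]
    ring
  have hma : m a * starRingEnd ℂ (m a) ≠ 0 := by
    simpa [Complex.mul_conj, Complex.normSq_eq_zero] using ha
  have hc : starRingEnd ℂ c = c := by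
    have h := hherm a a
    rw [hM' a a, map_mul, map_mul, Complex.conj_conj] at h
    refine mul_right_cancel₀ hma ?_
    linear_combination -h
  refine ⟨c.re, fun i j => ?_⟩
  rw [Complex.conj_eq_iff_re.mp hc, hM']

theorem type_D_Ricci_spinor_form_general (o ι : Sp) (μ : ℂ) (Ψ Φ : Tensor4)
    (hnorm : pair o ι = 1) (hμ : μ ≠ 0)
    (hΨ : ∀ A B C D, Ψ A B C D = 6 * μ * Sym4 o o ι ι A B C D)
    (hsymAB : ∀ A B A' B', Φ A B A' B' = Φ B A A' B')
    (hherm : ∀ A B A' B', Φ A B A' B' = (starRingEnd ℂ) (Φ A' B' A B))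
    (hcond : ∀ A' B' C D E F,
      symz (fun C D E F => ∑ G, ∑ H, eps G H * Φ C H A' B' * Ψ D E F G) C D E F = 0) :
    ∃ φ : ℝ, ∀ A B A' B',
      Φ A B A' B' = 4 * (φ : ℂ) * ((o A * ι B + o B * ι A) / 2) *
        ((conjSp o A' * conjSp ι B' + conjSp o B' * conjSp ι A') / 2) := by
  have hΨ' : ∀ A B C D, Ψ A B C D = 6 * μ * Sym4 ι ι o o A B C D := by
    simpa only [Sym4_swap o o] using hΨ
  have hιo : pair ι o ≠ 0 := by rw [pair_swap, hnorm]; norm_num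
  have hrank : ∀ A B A' B', Φ A B A' B' =
      -contract2 (fun C H => Φ C H A' B') o ι * (o A * ι B + o B * ι A) := by
    intro A B A' B'
    have hvan : symz (contractLast (fun C H => Φ C H A' B') Ψ) = 0 := by
      funext C D E F
      exact hcond A' B' C D E F
    have hoo := contract2_eq_zero_of_symz_contractLast_eq_zero _ o ι μ Ψ (by simp [hnorm]) hμ
      hΨ hvan
    have hιι := contract2_eq_zero_of_symz_contractLast_eq_zero _ ι o μ Ψ hιo hμ hΨ' hvan
    have h := pair_sq_mul_eq_dyad_expansion _ (fun C H => hsymAB C H A' B') o ι A B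
    rw [hnorm, hoo, hιι] at h
    linear_combination h
  obtain ⟨r, hr⟩ := exists_real_of_hermitian_of_eq_mul
    (fun p q : Fin 2 × Fin 2 => Φ p.1 p.2 q.1 q.2) (fun p => o p.1 * ι p.2 + o p.2 * ι p.1)
    (fun q => -contract2 (fun C H => Φ C H q.1 q.2) o ι)
    (fun p q => hrank p.1 p.2 q.1 q.2) (fun p q => hherm p.1 p.2 q.1 q.2)
  refine ⟨r, fun A B A' B' => ?_⟩
  rw [hr (A, B) (A', B')]
  simp only [conjSp, map_add, map_mul]
  ring

/-- if `Ψ = 6μ o_{(A}o_B ι_C ι_{D)}` is nonzero type D (dyad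
normalized, μ ≠ 0) and the Hermitian spinor Φ (symmetric in AB and A'B')
satisfies `Φ_{A'B'(C}{}^G Ψ_{DEF)G} = 0`, then
`Φ_{ABA'B'} = 4φ o_{(A} ι_{B)} ō_{(A'} ῑ_{B')}` for some real φ. -/
theorem type_D_Ricci_spinor_form (o ι : Sp) (μ : ℂ) (Ψ Φ : Tensor4)
    (hnorm : pair o ι = 1) (hμ : μ ≠ 0)
    (hΨ : ∀ A B C D, Ψ A B C D = 6 * μ * Sym4 o o ι ι A B C D)
    (hΨne : Ψ ≠ 0)
    (hsymAB : ∀ A B A' B', Φ A B A' B' = Φ B A A' B')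
    (hsymA'B' : ∀ A B A' B', Φ A B A' B' = Φ A B B' A')
    (hherm : ∀ A B A' B', Φ A B A' B' = (starRingEnd ℂ) (Φ A' B' A B))
    (hcond : ∀ A' B' C D E F,
      symz (fun C D E F => ∑ G, ∑ H, eps G H * Φ C H A' B' * Ψ D E F G) C D E F = 0) :
    ∃ φ : ℝ, ∀ A B A' B',
      Φ A B A' B' = 4 * (φ : ℂ) * ((o A * ι B + o B * ι A) / 2) *
        ((conjSp o A' * conjSp ι B' + conjSp o B' * conjSp ι A') / 2) :=
  type_D_Ricci_spinor_form_general o ι μ Ψ Φ hnorm hμ hΨ hsymAB hherm hcond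
end
end

section
/- For the type-D data Ψ_{ABCD} = 6μ o_{(A} o_B ι_C ι_{D)}, Φ_{ABA'B'} = 4φ o_{(A} ι_{B)} ō_{(A'} ῑ_{B')}, and R = -12μ, with o_A ι^A = 1, the Ricci semi-symmetry identity holds: 24 Ψ_{ABC}^{\;\;E} Φ_{EDC'D'} + 24 Ψ_{ABD}^{\;\;E} Φ_{CEC'D'} + R(ε_{AC} Φ_{BDC'D'} + ε_{BC} Φ_{ADC'D'} + ε_{AD} Φ_{BCC'D'} + ε_{BD} Φ_{ACC'D'}) = 0. -/
open scoped BigOperators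

noncomputable section

/-!
The primed factor `ō_{(C'}ῑ_{D')}` is common to every term, so the identity reduces to one between
unprimed spinors built from `o` and `ι`. Since spin space is two-dimensional, `o_X ι_Y - ι_X o_Y`
is `(o_A ι^A) ε_{XY}`; replacing each explicit `ε` by this expression (with the normalization
written as a power of `o_A ι^A`) turns the unprimed identity into a polynomial identity in the
components of `o` and `ι`, which holds without any normalization.
-/

theorem pair_mul_eps (α β : Sp) (X Y : Fin 2) : pair α β * eps X Y = α X * β Y - β X * α Y := by
  fin_cases X <;> fin_cases Y <;> simp [pair, up, eps, Fin.sum_univ_two] <;> ring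

theorem Sym4_apply_self_self (α β : Sp) (A B C D : Fin 2) :
    Sym4 α α β β A B C D =
      (α A * α B * β C * β D + α A * α C * β B * β D + α A * α D * β B * β C +
       α B * α C * β A * β D + α B * α D * β A * β C + α C * α D * β A * β B) / 6 := by
  -- so that `decomposeFin_symm_apply_succ` fires on the literal indices in `symz`
  have h2 : (2 : Fin 4) = Fin.succ 1 := rfl
  have h3 : (3 : Fin 4) = Fin.succ (Fin.succ 1) := rfl
  simp only [Sym4, symz, Finset.univ_perm_fin_succ, Finset.sum_map, Fintype.sum_prod_type,
    Equiv.coe_toEmbedding, Fintype.sum_unique, Fin.sum_univ_succ, h2, h3,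
    Equiv.Perm.decomposeFin_symm_apply_zero, Equiv.Perm.decomposeFin_symm_apply_succ,
    Equiv.Perm.decomposeFin_symm_apply_one]
  simp only [one_div, Nat.succ_eq_add_one, Nat.reduceAdd, Fin.isValue, Matrix.cons_val_zero,
    Equiv.swap_self, Fin.succ_zero_eq_one, Equiv.refl_apply, Matrix.cons_val_one,
    Fin.succ_one_eq_two, Matrix.cons_val, Fin.default_eq_zero, Fin.reduceSucc,
    Equiv.swap_apply_right, Equiv.swap_apply_def, Fin.ext_iff, Fin.coe_ofNat_eq_mod, Nat.mod_succ,
    Nat.zero_mod, OfNat.ofNat_ne_zero, ↓reduceIte, Nat.one_mod, OfNat.ofNat_ne_one, one_ne_zero,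
    OfNat.one_ne_ofNat, Nat.reduceMod, OfNat.ofNat_eq_ofNat, Nat.succ_ne_self, Nat.reduceEqDiff]
  ring

def symProd2 (α β : Sp) : Fin 2 → Fin 2 → ℂ := fun A B => (α A * β B + α B * β A) / 2

theorem contract_Sym4_symProd2 (o ι : Sp) (A B C D : Fin 2) :
    12 * (∑ E, ∑ F, eps E F * Sym4 o o ι ι A B C F * symProd2 o ι E D) +
      12 * (∑ E, ∑ F, eps E F * Sym4 o o ι ι A B D F * symProd2 o ι C E) =
    pair o ι ^ 2 * (eps A C * symProd2 o ι B D + eps B C * symProd2 o ι A D +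
      eps A D * symProd2 o ι B C + eps B D * symProd2 o ι A C) := by
  have hε : ∀ X Y, pair o ι ^ 2 * eps X Y = pair o ι * (o X * ι Y - ι X * o Y) := fun X Y => by
    rw [sq, mul_assoc, pair_mul_eps]
  simp only [mul_add, ← mul_assoc, hε]
  simp only [symProd2, Sym4_apply_self_self, Fin.sum_univ_two, pair, up, eps,
    Matrix.cons_val_zero, Matrix.cons_val_one]
  ring

/-- for type-D data `Ψ = 6μ o_{(A}o_B ι_C ι_{D)}`,
`Φ = 4φ o_{(A}ι_{B)} ō_{(A'}ῑ_{B')}`, `R = -12μ`, with `o_A ι^A = 1`, the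
Ricci semi-symmetry identity holds. -/
theorem type_D_Ricci_semisymmetry_identity (o ι : Sp) (μ φ R : ℂ) (Ψ Φ : Tensor4)
    (hnorm : pair o ι = 1)
    (hΨ : ∀ A B C D, Ψ A B C D = 6 * μ * Sym4 o o ι ι A B C D)
    (hΦ : ∀ A B A' B', Φ A B A' B' = 4 * φ * ((o A * ι B + o B * ι A) / 2) *
        ((conjSp o A' * conjSp ι B' + conjSp o B' * conjSp ι A') / 2))
    (hR : R = -12 * μ) :
    ∀ A B C D C' D',
      24 * (∑ E, ∑ F, eps E F * Ψ A B C F * Φ E D C' D') +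
      24 * (∑ E, ∑ F, eps E F * Ψ A B D F * Φ C E C' D') +
      R * (eps A C * Φ B D C' D' + eps B C * Φ A D C' D' +
           eps A D * Φ B C C' D' + eps B D * Φ A C C' D') = 0 := by
  intro A B C D C' D'
  have hΦ' : ∀ A B A' B', Φ A B A' B' =
      4 * φ * symProd2 o ι A B * symProd2 (conjSp o) (conjSp ι) A' B' := hΦ
  have key := contract_Sym4_symProd2 o ι A B C D
  rw [hnorm, one_pow, one_mul] at key
  simp only [Fin.sum_univ_two] at key
  simp only [hΨ, hΦ', hR, Fin.sum_univ_two]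
  linear_combination 48 * μ * φ * symProd2 (conjSp o) (conjSp ι) C' D' * key
end
end
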